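/- arXiv:1501.05023 — 5 statements merged into one kernel-verified Lean document; each statement's English description precedes it below -/
import Mathlib

section
/- Let ζ ∈ 𝕋² be a periodic point of T of prime period q and let τ > 0. Take s_n = √(τ/(πn)) and u_n = −log s_n, and set g(n) = ⌊(log n + log(λ^{2q}+1) − 2·log(2|λ|^q·√(τ/π)))/(2q·log|λ|)⌋. Then for all sufficiently large n, A_n^{(q)} ∩ T^{−j}(A_n^{(q)}) = ∅ for every 1 ≤ j ≤ q·g(n); in particular Σ_{j=1}^{q·g(n)} m(A_n^{(q)} ∩ T^{−j}(A_n^{(q)})) = 0. -/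
open MeasureTheory Filter Topology Set

noncomputable section

/-- The 2-torus ℝ²/ℤ², with its product (Haar/Lebesgue) probability measure. -/
abbrev Torus2 := AddCircle (1 : ℝ) × AddCircle (1 : ℝ)

/-- Projection of a vector in the plane to the torus. -/
def torusProj (v : ℝ × ℝ) : Torus2 := (↑v.1, ↑v.2)

/-- The automorphism of the torus induced by an integer matrix `L`. -/
def anosovMap (L : Matrix (Fin 2) (Fin 2) ℤ) (z : Torus2) : Torus2 :=
  (L 0 0 • z.1 + L 0 1 • z.2, L 1 0 • z.1 + L 1 1 • z.2)

/-- The quotient metric on the torus induced by the Euclidean metric on the plane: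
the infimum of the Euclidean norms of the representatives of `z - w`. -/
def dEuc (z w : Torus2) : ℝ :=
  sInf {r | ∃ v : ℝ × ℝ, torusProj v = z - w ∧ r = Real.sqrt (v.1 ^ 2 + v.2 ^ 2)}

/-- `v` is an eigenvector of `L` (viewed as a real matrix) with eigenvalue `lam`. -/
def IsEigen (L : Matrix (Fin 2) (Fin 2) ℤ) (lam : ℝ) (v : ℝ × ℝ) : Prop :=
  v ≠ 0 ∧ (L 0 0 : ℝ) * v.1 + (L 0 1 : ℝ) * v.2 = lam * v.1
        ∧ (L 1 0 : ℝ) * v.1 + (L 1 1 : ℝ) * v.2 = lam * v.2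

/-- `A_n^{(q)} = {X₀ > uₙ, X₁ ≤ uₙ, …, X_q ≤ uₙ}` with `X_i(x) = -log d(Tⁱx, ζ)`. -/
def Aq (L : Matrix (Fin 2) (Fin 2) ℤ) (ζ : Torus2) (u : ℕ → ℝ) (q n : ℕ) :
    Set Torus2 :=
  {x | u n < -Real.log (dEuc x ζ) ∧
    ∀ i, 1 ≤ i → i ≤ q → -Real.log (dEuc ((anosovMap L)^[i] x) ζ) ≤ u n}

/-!
For `x ∈ A_n^{(q)} ∩ T^{-j}A_n^{(q)}`, lift `x - ζ` and `Tʲx - ζ` to vectors `y`, `v` of norm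
`< sₙ`. Then `p = v - Lʲy` lifts `Tʲζ - ζ`, a point of the finite, `T^q`-fixed set of orbit
differences of `ζ`. For `j ≤ q·g(n)` the choice of `g` gives `|λ|ʲ sₙ ≤ 1`, so `p` has bounded
unstable and `O(sₙ)` stable coordinate. Pulling `p` back by a fixed power `L^M` with `q ∣ M` makes
it shorter than every nonzero lift of that finite set, which forces `p = 0` once `n` is large.
Hence `Tʲζ = ζ`, so `q ∣ j`, and `v = Lʲy`. But `L^q` satisfies `X² = tX - 1` with
`|t| = |λ^q + λ^{-q}| ≥ 2`, so `‖L^{qk}y‖` is nondecreasing in `k`; since `x ∈ A_n^{(q)}` forces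
`‖L^q y‖ ≥ sₙ`, this contradicts `‖v‖ < sₙ`.
-/

lemma two_le_abs_add_inv {x : ℝ} (hx : x ≠ 0) : 2 ≤ |x + x⁻¹| := by
  have hsq : (2 : ℝ) ^ 2 ≤ (x + x⁻¹) ^ 2 := by
    have := mul_inv_cancel₀ hx
    nlinarith [sq_nonneg (x - x⁻¹)]
  simpa using sq_le_sq.mp hsq

open Real in
lemma pos_and_lt_of_neg_log_lt_neg_log {s d : ℝ} (hs0 : 0 < s) (hs1 : s < 1) (hd : 0 ≤ d)
    (h : -log s < -log d) : 0 < d ∧ d < s := by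
  have hd0 : 0 < d := hd.lt_of_ne <| by
    rintro rfl
    have := log_neg hs0 hs1
    simp only [log_zero, neg_zero] at h
    linarith
  exact ⟨hd0, (log_lt_log_iff hd0 hs0).1 (by linarith)⟩

open Real in
lemma eq_zero_or_le_of_neg_log_le_neg_log {s d : ℝ} (hs0 : 0 < s) (hd : 0 ≤ d)
    (h : -log d ≤ -log s) : d = 0 ∨ s ≤ d := by
  rcases hd.eq_or_lt with rfl | hd0
  · exact Or.inl rfl
  · exact Or.inr ((log_le_log_iff hs0 hd0).1 (by linarith))

open Real in
lemma pow_mul_sqrt_le_one {lam τ : ℝ} (hlam : 1 < |lam|) (hτ : 0 < τ) {q n j : ℕ} (hq : 0 < q)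
    (hn : 0 < n) (hj : (j : ℤ) ≤ q * ⌊(log n + log (lam ^ (2 * q) + 1) -
        2 * log (2 * |lam| ^ q * √(τ / π))) / (2 * q * log |lam|)⌋) :
    |lam| ^ j * √(τ / (π * n)) ≤ 1 := by
  set c := 2 * |lam| ^ q * √(τ / π)
  have hlog : 0 < log |lam| := log_pos hlam
  have hc : 0 < c := by positivity
  have hl2q : lam ^ (2 * q) = (|lam| ^ q) ^ 2 := by rw [← pow_mul', pow_mul, pow_mul, sq_abs]
  have hl2q1 : 1 ≤ lam ^ (2 * q) := by rw [hl2q]; exact one_le_pow₀ (one_le_pow₀ hlam.le)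
  have hjlog : 2 * j * log |lam| ≤ log (n * (lam ^ (2 * q) + 1) / c ^ 2) := by
    have hfloor := (Int.cast_le (R := ℝ)).2 hj
    push_cast at hfloor
    have := hfloor.trans (mul_le_mul_of_nonneg_left (Int.floor_le _) (Nat.cast_nonneg q))
    rw [log_div (by positivity) (by positivity), log_mul (by positivity) (by positivity), log_pow]
    rw [mul_div_assoc', le_div_iff₀ (by positivity)] at this
    push_cast
    have hq' : (0 : ℝ) < q := by exact_mod_cast hq
    nlinarith
  have hpow : |lam| ^ (2 * j) ≤ n * (lam ^ (2 * q) + 1) / c ^ 2 := by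
    rw [← log_le_log_iff (by positivity) (by positivity), log_pow]
    push_cast; linarith
  have hsq : (|lam| ^ j * √(τ / (π * n))) ^ 2 ≤ 1 := by
    rw [mul_pow, ← pow_mul', sq_sqrt (by positivity)]
    calc |lam| ^ (2 * j) * (τ / (π * n))
        ≤ n * (lam ^ (2 * q) + 1) / c ^ 2 * (τ / (π * n)) := by gcongr
      _ = (lam ^ (2 * q) + 1) / (4 * lam ^ (2 * q)) := by
        simp only [c, mul_pow, sq_sqrt (by positivity : 0 ≤ τ / π), hl2q]
        field_simp
        norm_num
      _ ≤ 1 := by rw [div_le_one (by positivity)]; linarith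
  exact (pow_le_one_iff_of_nonneg (by positivity) two_ne_zero).1 hsq

lemma monotone_norm_iterate_of_apply_apply_eq {𝕜 V : Type*} [NormedField 𝕜]
    [SeminormedAddCommGroup V] [NormedSpace 𝕜 V] {f : V → V} {t : 𝕜} (ht : 2 ≤ ‖t‖)
    (hf : ∀ v, f (f v) = t • f v - v) {y : V} (hy : ‖y‖ ≤ ‖f y‖) :
    Monotone fun k => ‖f^[k] y‖ := by
  refine monotone_nat_of_le_succ fun k => ?_
  induction k with
  | zero => simpa using hy
  | succ k ih =>
    have hstep : f^[k + 2] y = t • f^[k + 1] y - f^[k] y := by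
      simp only [Function.iterate_succ_apply', hf]
    have h := norm_sub_norm_le (t • f^[k + 1] y) (f^[k] y)
    rw [norm_smul, ← hstep] at h
    nlinarith [norm_nonneg (f^[k + 1] y)]

section Basis

variable {ι K V : Type*} [Field K] [AddCommGroup V] [Module K V]

lemma Module.Basis.coord_apply_of_apply_eq_smul (B : Module.Basis ι K V) {f : Module.End K V}
    {μ : ι → K} (hf : ∀ i, f (B i) = μ i • B i) (i : ι) (v : V) :
    B.coord i (f v) = μ i * B.coord i v := by
  refine LinearMap.congr_fun (B.ext (f₁ := B.coord i ∘ₗ f) (f₂ := μ i • B.coord i) fun j => ?_) v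
  by_cases hij : j = i
  · subst hij; simp [hf]
  · simp [hf, hij]

lemma apply_apply_eq_of_apply_basis_eq_smul (B : Module.Basis (Fin 2) K V) {f : Module.End K V}
    {a : K} (ha : a ≠ 0) (hf : ∀ i, f (B i) = ![a, a⁻¹] i • B i) (v : V) :
    f (f v) = (a + a⁻¹) • f v - v := by
  refine LinearMap.congr_fun (B.ext (f₁ := f * f) (f₂ := (a + a⁻¹) • f - 1) fun i => ?_) v
  fin_cases i <;> simp [hf, smul_smul, add_smul, ha]

lemma Module.Basis.exists_abs_coord_le {ι E : Type*} [Fintype ι] [NormedAddCommGroup E]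
    [NormedSpace ℝ E] [FiniteDimensional ℝ E] (B : Module.Basis ι ℝ E) :
    ∃ C, 0 ≤ C ∧ ∀ i v, |B.coord i v| ≤ C * ‖v‖ := by
  refine ⟨‖(B.equivFunL : E →L[ℝ] ι → ℝ)‖, norm_nonneg _, fun i v => ?_⟩
  calc |B.coord i v| = ‖(B.equivFunL : E →L[ℝ] ι → ℝ) v i‖ := by simp
    _ ≤ ‖(B.equivFunL : E →L[ℝ] ι → ℝ) v‖ := norm_le_pi_norm _ i
    _ ≤ _ := ContinuousLinearMap.le_opNorm _ _

end Basis

-- `ℝ × ℝ` itself carries the sup norm; `dEuc` is the quotient of the Euclidean one.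
abbrev Plane := WithLp 2 (ℝ × ℝ)

def planeProj (v : Plane) : Torus2 := torusProj (WithLp.ofLp v)

lemma continuous_planeProj : Continuous planeProj := by
  unfold planeProj torusProj; fun_prop

lemma planeProj_surjective : Function.Surjective planeProj := by
  intro z
  obtain ⟨a, ha⟩ := QuotientAddGroup.mk_surjective z.1
  obtain ⟨b, hb⟩ := QuotientAddGroup.mk_surjective z.2
  exact ⟨WithLp.toLp 2 (a, b), Prod.ext ha hb⟩

lemma planeProj_sub (v w : Plane) : planeProj (v - w) = planeProj v - planeProj w := rfl

lemma eq_zero_of_planeProj_eq_zero {v : Plane} (hv : planeProj v = 0) (h : ‖v‖ < 1) : v = 0 := by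
  obtain ⟨⟨a, ha⟩, ⟨b, hb⟩⟩ : (∃ a : ℤ, (a : ℝ) = v.fst) ∧ ∃ b : ℤ, (b : ℝ) = v.snd := by
    simpa [planeProj, torusProj, Prod.ext_iff, AddSubgroup.mem_zmultiples_iff] using hv
  have int_eq_zero : ∀ k : ℤ, ‖(k : ℝ)‖ < 1 → k = 0 := fun k hk => by
    rw [Real.norm_eq_abs, ← Int.cast_abs, ← Int.cast_one, Int.cast_lt] at hk
    exact Int.abs_lt_one_iff.1 hk
  have ha0 := int_eq_zero a (ha ▸ (WithLp.norm_fst_le (x := v)).trans_lt h)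
  have hb0 := int_eq_zero b (hb ▸ (WithLp.norm_snd_le (x := v)).trans_lt h)
  rw [WithLp.ext_iff]
  ext <;> simp_all

lemma exists_pos_eq_zero_of_planeProj_mem {F : Set Torus2} (hF : F.Finite) :
    ∃ δ > 0, ∀ p : Plane, planeProj p ∈ F → ‖p‖ < δ → p = 0 := by
  have : ∀ᶠ p in 𝓝 (0 : Plane), ∀ z ∈ F, planeProj p = z → p = 0 := by
    refine hF.eventually_all.2 fun z _ => ?_
    by_cases hz : z = 0
    · filter_upwards [Metric.ball_mem_nhds (0 : Plane) one_pos] with p hp hpz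
      exact eq_zero_of_planeProj_eq_zero (hpz.trans hz) (by simpa using hp)
    · have h0z : planeProj 0 ≠ z := Ne.symm hz
      filter_upwards [continuous_planeProj.continuousAt.eventually_ne h0z] with p hp hpz
      exact absurd hpz hp
  obtain ⟨δ, hδ, h⟩ := Metric.eventually_nhds_iff.1 this
  exact ⟨δ, hδ, fun p hp hpδ => h (by simpa using hpδ) _ hp rfl⟩

lemma dEuc_eq_sInf (z w : Torus2) : dEuc z w = sInf (norm '' (planeProj ⁻¹' {z - w})) := by
  unfold dEuc
  congr 1
  ext r
  constructor
  · rintro ⟨v, hv, rfl⟩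
    exact ⟨WithLp.toLp 2 v, hv, by simp [WithLp.prod_norm_eq_of_L2]⟩
  · rintro ⟨v, hv, rfl⟩
    exact ⟨WithLp.ofLp v, hv, by simp [WithLp.prod_norm_eq_of_L2]⟩

lemma dEuc_nonneg (z w : Torus2) : 0 ≤ dEuc z w := by
  rw [dEuc_eq_sInf]
  exact Real.sInf_nonneg (by rintro _ ⟨v, -, rfl⟩; exact norm_nonneg v)

lemma dEuc_le_norm {z w : Torus2} {v : Plane} (hv : planeProj v = z - w) : dEuc z w ≤ ‖v‖ := by
  rw [dEuc_eq_sInf]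
  exact csInf_le ⟨0, by rintro _ ⟨v, -, rfl⟩; exact norm_nonneg v⟩ ⟨v, hv, rfl⟩

lemma exists_planeProj_eq_norm_lt {z w : Torus2} {r : ℝ} (h : dEuc z w < r) :
    ∃ v : Plane, planeProj v = z - w ∧ ‖v‖ < r := by
  rw [dEuc_eq_sInf] at h
  have hne : (planeProj ⁻¹' {z - w}).Nonempty := planeProj_surjective (z - w)
  obtain ⟨_, ⟨v, hv, rfl⟩, hvr⟩ := exists_lt_of_csInf_lt (hne.image norm) h
  exact ⟨v, hv, hvr⟩

lemma dEuc_self (z : Torus2) : dEuc z z = 0 :=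
  le_antisymm (by simpa using dEuc_le_norm (v := 0) (sub_self z).symm) (dEuc_nonneg z z)

lemma eq_of_dEuc_eq_zero {z w : Torus2} (h : dEuc z w = 0) : z = w := by
  obtain ⟨δ, hδ, hF⟩ := exists_pos_eq_zero_of_planeProj_mem (Set.finite_singleton (z - w))
  obtain ⟨v, hv, hvδ⟩ := exists_planeProj_eq_norm_lt (h.trans_lt hδ)
  rw [← sub_eq_zero, ← hv, hF v hv hvδ]
  rfl

def planeMap (L : Matrix (Fin 2) (Fin 2) ℤ) : Module.End ℝ Plane where
  toFun v := WithLp.toLp 2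
    ((L 0 0 : ℝ) * v.fst + (L 0 1 : ℝ) * v.snd, (L 1 0 : ℝ) * v.fst + (L 1 1 : ℝ) * v.snd)
  map_add' v w := by rw [WithLp.ext_iff]; ext <;> simp <;> ring
  map_smul' c v := by rw [WithLp.ext_iff]; ext <;> simp <;> ring

lemma Function.IsPeriodicPt.finite_range_iterate {α : Type*} {f : α → α} {x : α} {q : ℕ}
    (hq : 0 < q) (hx : Function.IsPeriodicPt f q x) : (Set.range fun i => f^[i] x).Finite :=
  (Set.finite_range fun i : Fin q => f^[i] x).subset <| by
    rintro _ ⟨i, rfl⟩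
    exact ⟨⟨i % q, Nat.mod_lt _ hq⟩, hx.iterate_mod_apply i⟩

section Anosov

variable (L : Matrix (Fin 2) (Fin 2) ℤ)

lemma semiconj_planeProj_planeMap : Function.Semiconj planeProj (planeMap L) (anosovMap L) :=
  fun v => by simp [anosovMap, planeProj, torusProj, planeMap]

lemma anosovMap_add (z w : Torus2) : anosovMap L (z + w) = anosovMap L z + anosovMap L w := by
  simp only [anosovMap, Prod.fst_add, Prod.snd_add, smul_add, Prod.mk_add_mk]
  congr 1 <;> abel

def anosovHom : Torus2 →+ Torus2 := AddMonoidHom.mk' (anosovMap L) (anosovMap_add L)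

lemma anosovMap_iterate_map_sub (m : ℕ) (z w : Torus2) :
    (anosovMap L)^[m] (z - w) = (anosovMap L)^[m] z - (anosovMap L)^[m] w :=
  iterate_map_sub (anosovHom L) m z w

lemma anosovMap_iterate_sub {x ζ : Torus2} {y : Plane} (hy : planeProj y = x - ζ) (m : ℕ) :
    (anosovMap L)^[m] x - (anosovMap L)^[m] ζ = planeProj ((planeMap L ^ m) y) := by
  rw [Module.End.coe_pow, ((semiconj_planeProj_planeMap L).iterate_right m) y, hy,
    anosovMap_iterate_map_sub]

lemma anosovMap_mul (A B : Matrix (Fin 2) (Fin 2) ℤ) (z : Torus2) :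
    anosovMap (A * B) z = anosovMap A (anosovMap B z) := by
  simp only [anosovMap, Matrix.mul_apply, Fin.sum_univ_two, add_smul, mul_smul, smul_add]
  congr 1 <;> abel

lemma anosovMap_one (z : Torus2) : anosovMap 1 z = z := by
  simp [anosovMap]

variable {L}

lemma anosovMap_injective (hdet : L.det = 1) : Function.Injective (anosovMap L) :=
  Function.LeftInverse.injective (g := anosovMap L.adjugate) fun z => by
    rw [← anosovMap_mul, Matrix.adjugate_mul, hdet, one_smul, anosovMap_one]

end Anosov

section Aq

variable {L : Matrix (Fin 2) (Fin 2) ℤ} {ζ x : Torus2} {u : ℕ → ℝ} {q n : ℕ} {s : ℝ}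

lemma dEuc_pos_and_lt_of_mem_Aq (hu : u n = -Real.log s) (hs0 : 0 < s) (hs1 : s < 1)
    (hx : x ∈ Aq L ζ u q n) : 0 < dEuc x ζ ∧ dEuc x ζ < s :=
  pos_and_lt_of_neg_log_lt_neg_log hs0 hs1 (dEuc_nonneg x ζ) (hu ▸ hx.1)

-- `Real.log 0 = 0`, so the condition `X_i ≤ uₙ` also holds when `Tⁱx = ζ`.
lemma iterate_eq_or_le_dEuc_of_mem_Aq (hu : u n = -Real.log s) (hs0 : 0 < s)
    (hx : x ∈ Aq L ζ u q n) {i : ℕ} (hi1 : 1 ≤ i) (hiq : i ≤ q) :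
    (anosovMap L)^[i] x = ζ ∨ s ≤ dEuc ((anosovMap L)^[i] x) ζ :=
  (eq_zero_or_le_of_neg_log_le_neg_log hs0 (dEuc_nonneg _ _) (hu ▸ hx.2 i hi1 hiq)).imp_left
    eq_of_dEuc_eq_zero

end Aq

section Hyperbolic

variable {L : Matrix (Fin 2) (Fin 2) ℤ} {lam : ℝ}

lemma IsEigen.hasEigenvector {μ : ℝ} {v : ℝ × ℝ} (h : IsEigen L μ v) :
    (planeMap L).HasEigenvector μ (WithLp.toLp 2 v) := by
  refine Module.End.hasEigenvector_iff.2 ⟨Module.End.mem_eigenspace_iff.2 ?_, by simpa using h.1⟩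
  rw [WithLp.ext_iff]
  exact Prod.ext h.2.1 h.2.2

lemma exists_basis_hasEigenvector {eu es : ℝ × ℝ} (heu : IsEigen L lam eu)
    (hes : IsEigen L lam⁻¹ es) (hlam : 1 < |lam|) :
    ∃ B : Module.Basis (Fin 2) ℝ Plane,
      ∀ i, (planeMap L).HasEigenvector (![lam, lam⁻¹] i) (B i) := by
  have hne : lam ≠ lam⁻¹ := fun h => by
    have hsq : lam * lam = 1 := by
      nth_rw 2 [h]; exact mul_inv_cancel₀ (by rintro rfl; norm_num at hlam)
    have : |lam| * |lam| = 1 := by rw [← abs_mul, hsq, abs_one]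
    nlinarith
  have heig : ∀ i, (planeMap L).HasEigenvector (![lam, lam⁻¹] i)
      (![WithLp.toLp 2 eu, WithLp.toLp 2 es] i) :=
    Fin.forall_fin_two.2 ⟨heu.hasEigenvector, hes.hasEigenvector⟩
  have hinj : Function.Injective ![lam, lam⁻¹] := by
    intro i j hij; fin_cases i <;> fin_cases j <;> simp_all [eq_comm]
  refine ⟨basisOfLinearIndependentOfCardEqFinrank
    ((planeMap L).eigenvectors_linearIndependent' _ hinj _ heig)
    (by simp [(WithLp.linearEquiv 2 ℝ (ℝ × ℝ)).finrank_eq]), fun i => ?_⟩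
  rw [coe_basisOfLinearIndependentOfCardEqFinrank]
  exact heig i

variable {B : Module.Basis (Fin 2) ℝ Plane}
  (hB : ∀ i, (planeMap L).HasEigenvector (![lam, lam⁻¹] i) (B i))
include hB

lemma exists_planeMap_pow_apply_eq (hlam : lam ≠ 0) (M : ℕ) (p : Plane) :
    ∃ p', (planeMap L ^ M) p' = p ∧
      ‖p'‖ ≤ |lam|⁻¹ ^ M * |B.coord 0 p| * ‖B 0‖ + |lam| ^ M * |B.coord 1 p| * ‖B 1‖ := by
  refine ⟨(lam⁻¹ ^ M * B.coord 0 p) • B 0 + (lam ^ M * B.coord 1 p) • B 1, ?_, ?_⟩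
  · have h0 := (hB 0).pow_apply M
    have h1 := (hB 1).pow_apply M
    simp only [Matrix.cons_val_zero, Matrix.cons_val_one] at h0 h1
    rw [map_add, map_smul, map_smul, h0, h1, smul_smul, smul_smul, mul_right_comm,
      mul_right_comm (lam ^ M), ← mul_pow, ← mul_pow, inv_mul_cancel₀ hlam, mul_inv_cancel₀ hlam,
      one_pow, one_mul, one_mul]
    simpa only [Fin.sum_univ_two, Module.Basis.coord_apply] using B.sum_repr p
  · refine (norm_add_le _ _).trans (le_of_eq ?_)
    simp [norm_smul, mul_assoc]

lemma exists_pos_eq_zero_of_planeProj_mem_of_abs_coord_le (hdet : L.det = 1) (hlam : 1 < |lam|)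
    {F : Set Torus2} (hF : F.Finite) {q : ℕ} (hq : 0 < q)
    (hfix : ∀ z ∈ F, (anosovMap L)^[q] z = z) (A : ℝ) :
    ∃ ε > 0, ∀ p : Plane, planeProj p ∈ F → |B.coord 0 p| ≤ A → |B.coord 1 p| ≤ ε → p = 0 := by
  have hlam0 : lam ≠ 0 := by rintro rfl; norm_num at hlam
  obtain ⟨δ, hδ, hsep⟩ := exists_pos_eq_zero_of_planeProj_mem hF
  obtain ⟨N, hN⟩ : ∃ N : ℕ, |lam|⁻¹ ^ (q * N) * A * ‖B 0‖ < δ / 2 := by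
    have hr : |lam|⁻¹ ^ q < 1 := pow_lt_one₀ (by positivity) (inv_lt_one_of_one_lt₀ hlam) hq.ne'
    have hlim := (tendsto_pow_atTop_nhds_zero_of_lt_one (by positivity) hr).mul_const (A * ‖B 0‖)
    rw [zero_mul] at hlim
    obtain ⟨N, hN⟩ := (hlim.eventually (gt_mem_nhds (half_pos hδ))).exists
    exact ⟨N, by rwa [pow_mul, mul_assoc]⟩
  set M := q * N
  set K := |lam| ^ M * ‖B 1‖
  refine ⟨δ / 2 / (K + 1), by positivity, fun p hpF hpA hpε => ?_⟩
  obtain ⟨p', hp'p, hp'⟩ := exists_planeMap_pow_apply_eq hB hlam0 M p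
  have hproj : planeProj p' = planeProj p := by
    apply (anosovMap_injective hdet).iterate M
    rw [← (semiconj_planeProj_planeMap L).iterate_right M, ← Module.End.coe_pow, hp'p]
    exact (Function.IsPeriodicPt.mul_const (hfix _ hpF) N).symm
  have hsmall : ‖p'‖ < δ := by
    have hK : K * (δ / 2 / (K + 1)) < δ / 2 := by
      rw [mul_div_assoc', div_lt_iff₀ (by positivity)]
      nlinarith
    calc ‖p'‖ ≤ |lam|⁻¹ ^ M * A * ‖B 0‖ + K * (δ / 2 / (K + 1)) := by
          refine hp'.trans (add_le_add (by gcongr) ?_)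
          rw [mul_right_comm]
          gcongr
      _ < δ := by linarith
  rw [← hp'p, hsep p' (hproj ▸ hpF) hsmall, map_zero]

lemma le_norm_planeMap_pow_mul_apply (hlam : lam ≠ 0) {ζ x : Torus2} {q : ℕ}
    (hper : (anosovMap L)^[q] ζ = ζ) {y : Plane} (hy : planeProj y = x - ζ) {s : ℝ}
    (hys : ‖y‖ < s) (hxq : s ≤ dEuc ((anosovMap L)^[q] x) ζ) {k : ℕ} (hk : 1 ≤ k) :
    s ≤ ‖(planeMap L ^ (q * k)) y‖ := by
  have hq : s ≤ ‖(planeMap L ^ q) y‖ :=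
    hxq.trans (dEuc_le_norm (by rw [← anosovMap_iterate_sub L hy q, hper]))
  have hrec : ∀ v, (planeMap L ^ q) ((planeMap L ^ q) v) =
      (lam ^ q + (lam ^ q)⁻¹) • (planeMap L ^ q) v - v :=
    apply_apply_eq_of_apply_basis_eq_smul B (pow_ne_zero q hlam) fun i => by
      rw [(hB i).pow_apply]; fin_cases i <;> simp [inv_pow]
  have hmono := monotone_norm_iterate_of_apply_apply_eq
    (by simpa using two_le_abs_add_inv (pow_ne_zero q hlam)) hrec (hys.le.trans hq)
  calc s ≤ ‖(⇑(planeMap L ^ q))^[1] y‖ := hq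
    _ ≤ ‖(⇑(planeMap L ^ q))^[k] y‖ := hmono hk
    _ = ‖(planeMap L ^ (q * k)) y‖ := by rw [pow_mul, Module.End.coe_pow _ k]

lemma coord_planeMap_pow_apply (j : ℕ) (i : Fin 2) (v : Plane) :
    B.coord i ((planeMap L ^ j) v) = ![lam, lam⁻¹] i ^ j * B.coord i v :=
  B.coord_apply_of_apply_eq_smul (μ := fun i => ![lam, lam⁻¹] i ^ j)
    (fun i => (hB i).pow_apply j) i v

lemma eq_planeMap_pow_apply_of_norm_lt (hlam : 1 < |lam|) {F : Set Torus2} {ε C s : ℝ}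
    (hsmall : ∀ p : Plane, planeProj p ∈ F → |B.coord 0 p| ≤ 2 * C → |B.coord 1 p| ≤ ε → p = 0)
    (hC : ∀ i v, |B.coord i v| ≤ C * ‖v‖) (hC0 : 0 ≤ C) (hs1 : s ≤ 1) (hCε : 2 * C * s ≤ ε)
    {j : ℕ} (hj : |lam| ^ j * s ≤ 1) {y v : Plane} (hy : ‖y‖ < s) (hv : ‖v‖ < s)
    (hF : planeProj (v - (planeMap L ^ j) y) ∈ F) :
    v = (planeMap L ^ j) y := by
  have hbound : ∀ i,
      |B.coord i (v - (planeMap L ^ j) y)| ≤ C * s + |![lam, lam⁻¹] i| ^ j * (C * s) := by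
    intro i
    rw [map_sub, coord_planeMap_pow_apply hB]
    refine (abs_sub _ _).trans (add_le_add ((hC i v).trans (by gcongr)) ?_)
    rw [abs_mul, abs_pow]
    gcongr
    exact (hC i y).trans (by gcongr)
  have hCs : 0 ≤ C * s := mul_nonneg hC0 ((norm_nonneg y).trans hy.le)
  refine sub_eq_zero.1 (hsmall _ hF ((hbound 0).trans ?_) ((hbound 1).trans ?_))
  · have : |lam| ^ j * (C * s) ≤ C := by nlinarith
    simp only [Matrix.cons_val_zero]; nlinarith
  · have : |lam⁻¹| ^ j ≤ 1 :=
      pow_le_one₀ (abs_nonneg _) (by rw [abs_inv]; exact inv_le_one_of_one_le₀ hlam.le)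
    simp only [Matrix.cons_val_one, Matrix.cons_val_zero]
    nlinarith

lemma Aq_inter_preimage_iterate_eq_empty (hlam : 1 < |lam|) {ζ : Torus2} {q : ℕ} (hq : 0 < q)
    (hper : (anosovMap L)^[q] ζ = ζ) (hprime : ∀ j : ℕ, 1 ≤ j → j < q → (anosovMap L)^[j] ζ ≠ ζ)
    {ε C : ℝ} (hsmall : ∀ p : Plane, planeProj p ∈ Set.range (fun i => (anosovMap L)^[i] ζ - ζ) →
      |B.coord 0 p| ≤ 2 * C → |B.coord 1 p| ≤ ε → p = 0)
    (hC : ∀ i v, |B.coord i v| ≤ C * ‖v‖) (hC0 : 0 ≤ C) {u : ℕ → ℝ} {s : ℝ} {n : ℕ}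
    (hu : u n = -Real.log s) (hs0 : 0 < s) (hs1 : s < 1) (hCε : 2 * C * s ≤ ε) {j : ℕ}
    (hj1 : 1 ≤ j) (hj : |lam| ^ j * s ≤ 1) :
    Aq L ζ u q n ∩ (anosovMap L)^[j] ⁻¹' Aq L ζ u q n = ∅ := by
  refine Set.eq_empty_iff_forall_notMem.2 fun x ⟨hx, hjx⟩ => ?_
  obtain ⟨hjx0, hjxs⟩ := dEuc_pos_and_lt_of_mem_Aq hu hs0 hs1 hjx
  obtain ⟨y, hy, hys⟩ := exists_planeProj_eq_norm_lt (dEuc_pos_and_lt_of_mem_Aq hu hs0 hs1 hx).2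
  obtain ⟨v, hv, hvs⟩ := exists_planeProj_eq_norm_lt hjxs
  have hyj := anosovMap_iterate_sub L hy j
  have hvy : v = (planeMap L ^ j) y :=
    eq_planeMap_pow_apply_of_norm_lt hB hlam hsmall hC hC0 hs1.le hCε hj hys hvs
      ⟨j, by rw [planeProj_sub, hv, ← hyj, sub_sub_sub_cancel_left]⟩
  have hjζ : (anosovMap L)^[j] ζ = ζ := by rwa [hvy, ← hyj, sub_right_inj] at hv
  obtain ⟨k, rfl⟩ : q ∣ j := Nat.dvd_of_mod_eq_zero <| by
    by_contra hne
    exact hprime _ (Nat.one_le_iff_ne_zero.2 hne) (Nat.mod_lt _ hq)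
      ((Function.IsPeriodicPt.iterate_mod_apply hper j).trans hjζ)
  have hk : 1 ≤ k := Nat.one_le_iff_ne_zero.2 (by rintro rfl; simp at hj1)
  have hxq : s ≤ dEuc ((anosovMap L)^[q] x) ζ := by
    refine (iterate_eq_or_le_dEuc_of_mem_Aq hu hs0 hx hq le_rfl).resolve_left fun hqx => ?_
    obtain ⟨k, rfl⟩ := Nat.exists_eq_add_of_le' hk
    rw [Function.iterate_mul, Function.iterate_succ_apply, hqx, Function.iterate_fixed hper,
      dEuc_self] at hjx0
    exact hjx0.false
  have hlam0 : lam ≠ 0 := by rintro rfl; norm_num at hlam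
  exact (le_norm_planeMap_pow_mul_apply hB hlam0 hper hy hys hxq hk).not_gt (hvy ▸ hvs)

end Hyperbolic

/-- at a periodic point of prime period `q`, with
`sₙ = √(τ/(πn))`, `uₙ = -log sₙ` and
`g(n) = ⌊(log n + log(λ^{2q}+1) − 2log(2|λ|^q√(τ/π)))/(2q log|λ|)⌋`, for all
sufficiently large `n` one has `A_n^{(q)} ∩ T^{-j}A_n^{(q)} = ∅` for
`1 ≤ j ≤ q·g(n)`; in particular the corresponding sum of measures vanishes. -/
theorem no_short_returns_periodic
    (L : Matrix (Fin 2) (Fin 2) ℤ) (hdet : L.det = 1)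
    (lam : ℝ) (hlam : 1 < |lam|)
    (eu es : ℝ × ℝ) (heu : IsEigen L lam eu) (hes : IsEigen L lam⁻¹ es)
    (ζ : Torus2) (q : ℕ) (hq : 1 ≤ q)
    (hper : (anosovMap L)^[q] ζ = ζ)
    (hprime : ∀ j : ℕ, 1 ≤ j → j < q → (anosovMap L)^[j] ζ ≠ ζ)
    (τ : ℝ) (hτ : 0 < τ)
    (s : ℕ → ℝ) (hs : ∀ n : ℕ, s n = Real.sqrt (τ / (Real.pi * n)))
    (u : ℕ → ℝ) (hu : ∀ n : ℕ, u n = -Real.log (s n))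
    (g : ℕ → ℤ)
    (hg : ∀ n : ℕ, g n = ⌊(Real.log n + Real.log (lam ^ (2 * q) + 1) -
        2 * Real.log (2 * |lam| ^ q * Real.sqrt (τ / Real.pi))) /
        (2 * q * Real.log |lam|)⌋) :
    ∀ᶠ n : ℕ in atTop,
      (∀ j : ℕ, 1 ≤ j → (j : ℤ) ≤ q * g n →
        Aq L ζ u q n ∩ (anosovMap L)^[j] ⁻¹' Aq L ζ u q n = ∅) ∧
      ∑ j ∈ Finset.Icc 1 (q * (g n).toNat),
        (volume (Aq L ζ u q n ∩ (anosovMap L)^[j] ⁻¹' Aq L ζ u q n)).toReal = 0 := by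
  obtain ⟨B, hB⟩ := exists_basis_hasEigenvector heu hes hlam
  obtain ⟨C, hC0, hC⟩ := B.exists_abs_coord_le
  set F := Set.range fun i => (anosovMap L)^[i] ζ - ζ
  have hF : F.Finite :=
    ((Function.IsPeriodicPt.finite_range_iterate hq hper).image (· - ζ)).subset <| by
      rintro _ ⟨i, rfl⟩
      exact ⟨_, ⟨i, rfl⟩, rfl⟩
  have hfix : ∀ z ∈ F, (anosovMap L)^[q] z = z := by
    rintro _ ⟨i, rfl⟩
    rw [anosovMap_iterate_map_sub, ← Function.iterate_add_apply, Nat.add_comm,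
      Function.iterate_add_apply, hper]
  obtain ⟨ε, hε, hsmall⟩ :=
    exists_pos_eq_zero_of_planeProj_mem_of_abs_coord_le hB hdet hlam hF hq hfix (2 * C)
  have hs_lim : Tendsto s atTop (𝓝 0) := by
    have := ((tendsto_natCast_atTop_atTop.const_mul_atTop Real.pi_pos).const_div_atTop τ).sqrt
    simpa [← funext hs] using this
  have hCs_lim : Tendsto (fun n => 2 * C * s n) atTop (𝓝 0) := by
    simpa using hs_lim.const_mul (2 * C)
  filter_upwards [eventually_gt_atTop 0, hs_lim.eventually (gt_mem_nhds one_pos),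
    hCs_lim.eventually (ge_mem_nhds hε)] with n hn hs1 hsε
  have hs0 : 0 < s n := by rw [hs]; positivity
  have hempty : ∀ j : ℕ, 1 ≤ j → (j : ℤ) ≤ q * g n →
      Aq L ζ u q n ∩ (anosovMap L)^[j] ⁻¹' Aq L ζ u q n = ∅ := fun j hj1 hjg =>
    Aq_inter_preimage_iterate_eq_empty hB hlam hq hper hprime hsmall hC hC0 (hu n) hs0 hs1 hsε hj1
      (by rw [hs]; exact pow_mul_sqrt_le_one hlam hτ hq hn (hg n ▸ hjg))
  refine ⟨hempty, Finset.sum_eq_zero fun j hj => ?_⟩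
  rw [Finset.mem_Icc] at hj
  have hg0 : 0 < (g n).toNat := Nat.pos_of_ne_zero fun h0 => by rw [h0, mul_zero] at hj; omega
  have hjg : (j : ℤ) ≤ q * g n := by
    rw [← Int.toNat_of_nonneg (Int.lt_toNat.1 hg0).le]
    exact_mod_cast hj.2
  rw [hempty j hj.1 hjg, measure_empty, ENNReal.toReal_zero]
end
end

section
/- Let λ ∈ ℝ with |λ| > 1, let s > 0, j ∈ ℕ with j ≥ 1, and c ∈ ℝ². Then the planar Lebesgue measure of the intersection of the open disk {z ∈ ℝ² : z₁² + z₂² < s²} with the ellipse region {z ∈ ℝ² : λ^{2j}(z₁−c₁)² + λ^{−2j}(z₂−c₂)² ≤ s²} is at most 4·|λ|^{−j}·s². (This is the geometric estimate m(U_n ∩ T^{−j}(U_n)) ≤ C·|λ|^{−j}·m(U_n) used to verify condition Д'₀(u_n) at non-periodic points for iterates j before the ellipse T^{−j}(U_n) wraps around the torus.) -/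
open MeasureTheory Filter Topology Set

noncomputable section

/-- the planar Lebesgue measure of the intersection of the open
disk of radius `s` with an ellipse region of semi-axes `|λ|^{-j}s` and
`|λ|^{j}s` (in the two coordinate directions) is at most `4|λ|^{-j}s²`. -/
theorem disk_inter_ellipse_measure_le
    (lam : ℝ) (hlam : 1 < |lam|) (s : ℝ) (hs : 0 < s) (j : ℕ) (hj : 1 ≤ j)
    (c : ℝ × ℝ) :
    volume ({z : ℝ × ℝ | z.1 ^ 2 + z.2 ^ 2 < s ^ 2} ∩
        {z : ℝ × ℝ | lam ^ (2 * j) * (z.1 - c.1) ^ 2 +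
          (lam ^ (2 * j))⁻¹ * (z.2 - c.2) ^ 2 ≤ s ^ 2}) ≤
      ENNReal.ofReal (4 * (|lam| ^ j)⁻¹ * s ^ 2) := by
  have hL : (0:ℝ) < |lam| ^ j := pow_pos (lt_trans one_pos hlam) j
  set a : ℝ := (|lam| ^ j)⁻¹ * s with ha
  have ha0 : 0 < a := mul_pos (inv_pos.mpr hL) hs
  have hpow : lam ^ (2 * j) = (|lam| ^ j) ^ 2 := by
    rw [pow_mul, ← sq_abs, ← pow_mul, mul_comm 2 j, pow_mul]
  have hsub : ({z : ℝ × ℝ | z.1 ^ 2 + z.2 ^ 2 < s ^ 2} ∩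
        {z : ℝ × ℝ | lam ^ (2 * j) * (z.1 - c.1) ^ 2 +
          (lam ^ (2 * j))⁻¹ * (z.2 - c.2) ^ 2 ≤ s ^ 2}) ⊆
      Icc (c.1 - a) (c.1 + a) ×ˢ Icc (-s) s := by
    rintro z ⟨h1, h2⟩
    simp only [mem_setOf_eq] at h1 h2
    rw [hpow] at h2
    have hnn : 0 ≤ (((|lam| ^ j) ^ 2))⁻¹ * (z.2 - c.2) ^ 2 := by positivity
    have key : (z.1 - c.1) ^ 2 ≤ a ^ 2 := by
      have h3 : (|lam| ^ j) ^ 2 * (z.1 - c.1) ^ 2 ≤ s ^ 2 := by linarith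
      have ha2 : a ^ 2 = s ^ 2 / (|lam| ^ j) ^ 2 := by
        rw [ha]; field_simp
      rw [ha2, le_div_iff₀ (by positivity)]
      linarith [h3]
    have key2 : z.2 ^ 2 < s ^ 2 := by nlinarith [sq_nonneg z.1]
    constructor
    · constructor
      · nlinarith [key, ha0]
      · nlinarith [key, ha0]
    · constructor
      · nlinarith [key2, hs]
      · nlinarith [key2, hs]
  calc volume ({z : ℝ × ℝ | z.1 ^ 2 + z.2 ^ 2 < s ^ 2} ∩
        {z : ℝ × ℝ | lam ^ (2 * j) * (z.1 - c.1) ^ 2 +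
          (lam ^ (2 * j))⁻¹ * (z.2 - c.2) ^ 2 ≤ s ^ 2})
      ≤ volume (Icc (c.1 - a) (c.1 + a) ×ˢ Icc (-s) s) := measure_mono hsub
    _ = ENNReal.ofReal (2 * a) * ENNReal.ofReal (2 * s) := by
        rw [Measure.volume_eq_prod, Measure.prod_prod, Real.volume_Icc, Real.volume_Icc]
        congr 1 <;> ring_nf
    _ = ENNReal.ofReal (4 * (|lam| ^ j)⁻¹ * s ^ 2) := by
        rw [← ENNReal.ofReal_mul (by positivity)]
        congr 1
        rw [ha]; ring
end
end

section
/- Let λ ∈ ℝ with |λ| > 1, q ∈ ℕ with q ≥ 1, and s > 0. Then Leb₂({(x,y) ∈ ℝ² : x² + y² < s² and λ^{2q}x² + λ^{−2q}y² ≥ s²}) = 2s²·(arcsin(|λ|^q/√(λ^{2q}+1)) − arcsin(1/√(λ^{2q}+1))). (This computes m(A_n^{(q)}) for the Euclidean metric and yields the extremal index ϑ = (2/π)(arcsin(|λ|^q/√(λ^{2q}+1)) − arcsin(1/√(λ^{2q}+1))) = m(A_n^{(q)})/m(U_n) with m(U_n) = πs².) -/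
/-!
Over `x`, the fibre of the set is the chord `|y| < √(1 - x²)` of the unit disk minus the chord
`|y| < √(L (1 - L x²))` of the ellipse, `L = λ^{2q}`. The ellipse chord is the disk chord rescaled
by `√L` in both directions, so after substituting `u = √L x` every integral is one of
`√(1 - u²)`, with primitive `(arcsin u + u √(1 - u²)) / 2`. The chords cross at
`x₀ = 1/√(L+1)`, inside which the fibre is empty, and the substitution sends `x₀` to
`√L/√(L+1) = √(1 - x₀²)`; the area is `4 ∫ √(1 - u²)` between these two points, where the
algebraic parts of the primitive cancel. The radius `s` only contributes the factor `s²`.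
-/

open MeasureTheory Set Real Pointwise

theorem hasDerivAt_arcsin_add_mul_sqrt_one_sub_sq {x : ℝ} (h₁ : -1 < x) (h₂ : x < 1) :
    HasDerivAt (fun x => (arcsin x + x * √(1 - x ^ 2)) / 2) √(1 - x ^ 2) x := by
  have hpos : 0 < 1 - x ^ 2 := by nlinarith
  have hsqrt : HasDerivAt (fun x => √(1 - x ^ 2)) (-(2 * x) / (2 * √(1 - x ^ 2))) x := by
    simpa using ((hasDerivAt_pow 2 x).const_sub 1).sqrt hpos.ne'
  refine (((hasDerivAt_arcsin h₁.ne' h₂.ne).add ((hasDerivAt_id' x).mul hsqrt)).div_const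
    2).congr_deriv ?_
  have hne : √(1 - x ^ 2) ≠ 0 := (sqrt_pos.2 hpos).ne'
  field_simp
  rw [sq_sqrt hpos.le]
  ring

theorem integral_sqrt_one_sub_sq_of_le {a b : ℝ} (ha : -1 ≤ a) (hab : a ≤ b) (hb : b ≤ 1) :
    ∫ x in a..b, √(1 - x ^ 2) =
      (arcsin b + b * √(1 - b ^ 2)) / 2 - (arcsin a + a * √(1 - a ^ 2)) / 2 :=
  intervalIntegral.integral_eq_sub_of_hasDerivAt_of_le hab (by fun_prop)
    (fun _ hx => hasDerivAt_arcsin_add_mul_sqrt_one_sub_sq (ha.trans_lt hx.1) (hx.2.trans_le hb))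
    (Continuous.intervalIntegrable (by fun_prop) _ _)

-- `Real.sqrt` vanishes on `(-∞, 0]`, so the integrand is `0` beyond `1`.
theorem integral_sqrt_one_sub_sq_of_one_le (a : ℝ) {b : ℝ} (hb : 1 ≤ b) :
    ∫ x in a..b, √(1 - x ^ 2) = ∫ x in a..1, √(1 - x ^ 2) := by
  have hint : Continuous fun x : ℝ => √(1 - x ^ 2) := by fun_prop
  rw [← intervalIntegral.integral_add_adjacent_intervals (hint.intervalIntegrable a 1)
    (hint.intervalIntegrable 1 b), add_eq_left]
  refine (intervalIntegral.integral_congr fun x hx => ?_).trans intervalIntegral.integral_zero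
  rw [uIcc_of_le hb] at hx
  exact sqrt_eq_zero_of_nonpos (by nlinarith [hx.1])

theorem integral_sqrt_mul_one_sub_mul_sq {L : ℝ} (hL : 0 < L) (a b : ℝ) :
    ∫ x in a..b, √(L * (1 - L * x ^ 2)) = ∫ u in √L * a..√L * b, √(1 - u ^ 2) := by
  have hsL : √L ≠ 0 := (sqrt_pos.2 hL).ne'
  have hscale : ∀ x : ℝ, √(L * (1 - L * x ^ 2)) = √L * √(1 - (√L * x) ^ 2) := fun x => by
    rw [sqrt_mul hL.le, mul_pow, sq_sqrt hL.le]
  simp_rw [hscale, intervalIntegral.integral_const_mul,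
    intervalIntegral.integral_comp_mul_left (fun u => √(1 - u ^ 2)) hsL, smul_eq_mul,
    mul_inv_cancel_left₀ hsL]

theorem volume_Ioo_neg_sdiff_Ioo_neg {b c : ℝ} (hc : 0 ≤ c) :
    volume (Ioo (-b) b \ Ioo (-c) c) = ENNReal.ofReal (2 * (b - c)) := by
  rcases le_or_gt c b with hcb | hbc
  · rw [measure_sdiff (Ioo_subset_Ioo (neg_le_neg hcb) hcb) measurableSet_Ioo.nullMeasurableSet
      measure_Ioo_lt_top.ne, Real.volume_Ioo, Real.volume_Ioo,
      ← ENNReal.ofReal_sub _ (by linarith)]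
    ring_nf
  · rw [sdiff_eq_empty.2 (Ioo_subset_Ioo (neg_le_neg hbc.le) hbc.le), measure_empty,
      ENNReal.ofReal_of_nonpos (by linarith)]

theorem le_one_div_sqrt_iff {a x : ℝ} (ha : 0 < a) (hx : 0 ≤ x) :
    x ≤ 1 / √a ↔ a * x ^ 2 ≤ 1 := by
  rw [← sq_le_sq₀ hx (by positivity), div_pow, one_pow, sq_sqrt ha.le, le_div_iff₀ ha, mul_comm]

/-- `A_n^{(q)} = U_n \ T^{-q} U_n` in eigen-coordinates centred at `ζ`, with `L = λ^{2q}`. -/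
def diskDiffEllipse (L s : ℝ) : Set (ℝ × ℝ) :=
  {p | p.1 ^ 2 + p.2 ^ 2 < s ^ 2 ∧ L * p.1 ^ 2 + L⁻¹ * p.2 ^ 2 ≥ s ^ 2}

theorem measurableSet_diskDiffEllipse (L s : ℝ) : MeasurableSet (diskDiffEllipse L s) :=
  (measurableSet_lt (f := fun p : ℝ × ℝ => p.1 ^ 2 + p.2 ^ 2) (by fun_prop) measurable_const).inter
    (measurableSet_le (g := fun p : ℝ × ℝ => L * p.1 ^ 2 + L⁻¹ * p.2 ^ 2) measurable_const
      (by fun_prop))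

theorem diskDiffEllipse_eq_smul (L : ℝ) {s : ℝ} (hs : s ≠ 0) :
    diskDiffEllipse L s = s • diskDiffEllipse L 1 := by
  have hs2 : 0 < s ^ 2 := by positivity
  ext p
  rw [mem_smul_set_iff_inv_smul_mem₀ hs]
  simp only [diskDiffEllipse, mem_ofPred_eq, Prod.smul_fst, Prod.smul_snd, smul_eq_mul, mul_pow,
    inv_pow, one_pow]
  have hdisk : (s ^ 2)⁻¹ * p.1 ^ 2 + (s ^ 2)⁻¹ * p.2 ^ 2 = (p.1 ^ 2 + p.2 ^ 2) / s ^ 2 := by ring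
  have hellipse : L * ((s ^ 2)⁻¹ * p.1 ^ 2) + L⁻¹ * ((s ^ 2)⁻¹ * p.2 ^ 2) =
      (L * p.1 ^ 2 + L⁻¹ * p.2 ^ 2) / s ^ 2 := by ring
  rw [hdisk, hellipse, div_lt_one hs2, ge_iff_le, ge_iff_le, one_le_div hs2]

theorem volume_diskDiffEllipse_eq_mul (L : ℝ) {s : ℝ} (hs : s ≠ 0) :
    volume (diskDiffEllipse L s) = ENNReal.ofReal (s ^ 2) * volume (diskDiffEllipse L 1) := by
  rw [diskDiffEllipse_eq_smul L hs, Measure.addHaar_smul, Module.finrank_prod,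
    Module.finrank_self, one_add_one_eq_two, abs_of_nonneg (sq_nonneg s)]

theorem preimage_mk_diskDiffEllipse {L : ℝ} (hL : 0 < L) (x : ℝ) :
    Prod.mk x ⁻¹' diskDiffEllipse L 1 =
      Ioo (-√(1 - x ^ 2)) √(1 - x ^ 2) \ Ioo (-√(L * (1 - L * x ^ 2))) √(L * (1 - L * x ^ 2)) := by
  ext y
  simp only [diskDiffEllipse, mem_preimage, mem_ofPred_eq, mem_sdiff, mem_Ioo, ← abs_lt,
    lt_sqrt (abs_nonneg y), sq_abs, one_pow]
  have hellipse : y ^ 2 - L * (1 - L * x ^ 2) = L * (L * x ^ 2 + L⁻¹ * y ^ 2 - 1) := by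
    field_simp
    ring
  rw [lt_sub_iff_add_lt', not_lt, ← sub_nonneg, hellipse, mul_nonneg_iff_of_pos_left hL,
    sub_nonneg, ge_iff_le]

noncomputable def chordGap (L x : ℝ) : ℝ := 2 * (√(1 - x ^ 2) - √(L * (1 - L * x ^ 2)))

theorem continuous_chordGap (L : ℝ) : Continuous (chordGap L) := by
  unfold chordGap
  fun_prop

theorem chordGap_abs (L x : ℝ) : chordGap L |x| = chordGap L x := by
  simp only [chordGap, sq_abs]

theorem chordGap_nonpos_of_one_le_sq (L : ℝ) {x : ℝ} (hx : 1 ≤ x ^ 2) : chordGap L x ≤ 0 := by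
  have : √(1 - x ^ 2) = 0 := sqrt_eq_zero_of_nonpos (by linarith)
  simp only [chordGap, this]
  nlinarith [sqrt_nonneg (L * (1 - L * x ^ 2))]

theorem chordGap_nonneg {L x : ℝ} (hL : 1 ≤ L) (hx : 1 ≤ (L + 1) * x ^ 2) :
    0 ≤ chordGap L x := by
  have : √(L * (1 - L * x ^ 2)) ≤ √(1 - x ^ 2) :=
    sqrt_le_sqrt (by nlinarith [mul_nonneg (sub_nonneg.2 hL) (sub_nonneg.2 hx)])
  simp only [chordGap]
  linarith

theorem chordGap_nonpos {L x : ℝ} (hL : 1 ≤ L) (hx : (L + 1) * x ^ 2 ≤ 1) :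
    chordGap L x ≤ 0 := by
  have : √(1 - x ^ 2) ≤ √(L * (1 - L * x ^ 2)) :=
    sqrt_le_sqrt (by nlinarith [mul_nonneg (sub_nonneg.2 hL) (sub_nonneg.2 hx)])
  simp only [chordGap]
  linarith

theorem integrable_max_chordGap_zero (L : ℝ) : Integrable fun x => max (chordGap L x) 0 := by
  refine ((continuous_chordGap L).max continuous_const).integrable_of_hasCompactSupport
    (HasCompactSupport.intro (isCompact_Icc (a := -1) (b := 1)) fun x hx => max_eq_right ?_)
  exact chordGap_nonpos_of_one_le_sq L
    ((one_le_sq_iff_one_le_abs x).2 (not_le.1 (hx ∘ abs_le.1)).le)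

theorem volume_diskDiffEllipse_one_eq_lintegral {L : ℝ} (hL : 0 < L) :
    volume (diskDiffEllipse L 1) = ∫⁻ x, ENNReal.ofReal (chordGap L x) := by
  rw [Measure.volume_eq_prod, Measure.prod_apply (measurableSet_diskDiffEllipse L 1)]
  simp_rw [preimage_mk_diskDiffEllipse hL, volume_Ioo_neg_sdiff_Ioo_neg (sqrt_nonneg _)]
  rfl

theorem integral_chordGap {L : ℝ} (hL : 1 ≤ L) :
    ∫ x in 1 / √(L + 1)..1, chordGap L x = arcsin (√L / √(L + 1)) - arcsin (1 / √(L + 1)) := by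
  set x₀ := 1 / √(L + 1)
  set A := √L / √(L + 1)
  have hL1 : 0 < L + 1 := by linarith
  have hsL1 : 0 < √(L + 1) := sqrt_pos.2 hL1
  have hx₀ : 0 ≤ x₀ := by positivity
  have hA : 0 ≤ A := by positivity
  have hx₀A : x₀ ≤ A := div_le_div_of_nonneg_right (one_le_sqrt.2 hL) hsL1.le
  have hA1 : A ≤ 1 := (div_le_one hsL1).2 (sqrt_le_sqrt (by linarith))
  have hsq : x₀ ^ 2 + A ^ 2 = 1 := by
    simp only [x₀, A, div_pow, sq_sqrt hL1.le, sq_sqrt (by linarith : 0 ≤ L)]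
    field_simp
    ring
  have hx₀' : √(1 - x₀ ^ 2) = A := by rw [← hsq, add_sub_cancel_left, sqrt_sq hA]
  have hA' : √(1 - A ^ 2) = x₀ := by rw [← hsq, add_sub_cancel_right, sqrt_sq hx₀]
  have hscale : √L * x₀ = A := by simp only [x₀, A]; ring
  simp only [chordGap]
  rw [intervalIntegral.integral_const_mul,
    intervalIntegral.integral_sub (Continuous.intervalIntegrable (by fun_prop) _ _)
      (Continuous.intervalIntegrable (by fun_prop) _ _),
    integral_sqrt_mul_one_sub_mul_sq (by linarith), hscale, mul_one,
    integral_sqrt_one_sub_sq_of_one_le _ (one_le_sqrt.2 hL),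
    integral_sqrt_one_sub_sq_of_le (by linarith) (hx₀A.trans hA1) le_rfl,
    integral_sqrt_one_sub_sq_of_le (by linarith) hA1 le_rfl, hx₀', hA']
  ring

theorem integral_max_chordGap_zero {L : ℝ} (hL : 1 ≤ L) :
    ∫ x, max (chordGap L x) 0 = 2 * ∫ x in 1 / √(L + 1)..1, chordGap L x := by
  set x₀ := 1 / √(L + 1)
  have hL1 : 0 < L + 1 := by linarith
  have hx₀ : 0 ≤ x₀ := by positivity
  have hx₀1 : x₀ ≤ 1 := (div_le_one (sqrt_pos.2 hL1)).2 (one_le_sqrt.2 (by linarith))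
  have hvanish : ∀ x ∈ Ioi 0 \ Ioc x₀ 1, max (chordGap L x) 0 = 0 := by
    rintro x ⟨hx : 0 < x, hx'⟩
    refine max_eq_right ?_
    rcases le_or_gt x x₀ with hle | hgt
    · exact chordGap_nonpos hL ((le_one_div_sqrt_iff hL1 hx.le).1 hle)
    · exact chordGap_nonpos_of_one_le_sq L (one_le_pow₀ (not_le.1 fun h => hx' ⟨hgt, h⟩).le)
  calc ∫ x, max (chordGap L x) 0 = ∫ x, max (chordGap L |x|) 0 := by simp only [chordGap_abs]
    _ = 2 * ∫ x in Ioi 0, max (chordGap L x) 0 :=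
      integral_comp_abs (f := fun x => max (chordGap L x) 0)
    _ = 2 * ∫ x in Ioc x₀ 1, max (chordGap L x) 0 := by
      rw [setIntegral_eq_of_subset_of_forall_sdiff_eq_zero measurableSet_Ioi
        (Ioc_subset_Ioi_self.trans (Ioi_subset_Ioi hx₀)) hvanish]
    _ = 2 * ∫ x in Ioc x₀ 1, chordGap L x := by
      refine congrArg _ (setIntegral_congr_fun measurableSet_Ioc fun x hx => max_eq_left ?_)
      have hx₀x : ¬x ≤ x₀ := not_le.2 hx.1
      rw [le_one_div_sqrt_iff hL1 (hx₀.trans hx.1.le), not_le] at hx₀x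
      exact chordGap_nonneg hL hx₀x.le
    _ = _ := by rw [← intervalIntegral.integral_of_le hx₀1]

theorem volume_diskDiffEllipse_one {L : ℝ} (hL : 1 ≤ L) :
    volume (diskDiffEllipse L 1) =
      ENNReal.ofReal (2 * (arcsin (√L / √(L + 1)) - arcsin (1 / √(L + 1)))) := by
  calc volume (diskDiffEllipse L 1) = ∫⁻ x, ENNReal.ofReal (max (chordGap L x) 0) := by
        simp only [volume_diskDiffEllipse_one_eq_lintegral (by linarith : 0 < L),
          ENNReal.ofReal_max, ENNReal.ofReal_zero, max_zero]
    _ = ENNReal.ofReal (∫ x, max (chordGap L x) 0) :=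
        (ofReal_integral_eq_lintegral_ofReal (integrable_max_chordGap_zero L)
          (ae_of_all _ fun _ => le_max_right _ _)).symm
    _ = _ := by rw [integral_max_chordGap_zero hL, integral_chordGap hL]

theorem measure_Aq_euclidean_general
    (lam : ℝ) (hlam : 1 < |lam|) (q : ℕ) (s : ℝ) (hs : 0 < s) :
    volume {p : ℝ × ℝ | p.1 ^ 2 + p.2 ^ 2 < s ^ 2 ∧
        lam ^ (2 * q) * p.1 ^ 2 + (lam ^ (2 * q))⁻¹ * p.2 ^ 2 ≥ s ^ 2} =
      ENNReal.ofReal (2 * s ^ 2 *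
        (Real.arcsin (|lam| ^ q / Real.sqrt (lam ^ (2 * q) + 1)) -
          Real.arcsin (1 / Real.sqrt (lam ^ (2 * q) + 1)))) := by
  have hL : 1 ≤ lam ^ (2 * q) := by
    rw [pow_mul]
    exact one_le_pow₀ ((one_lt_sq_iff_one_lt_abs lam).2 hlam).le
  have hsqrt : √(lam ^ (2 * q)) = |lam| ^ q := by rw [pow_mul', sqrt_sq_eq_abs, abs_pow]
  change volume (diskDiffEllipse (lam ^ (2 * q)) s) = _
  rw [volume_diskDiffEllipse_eq_mul _ hs.ne', volume_diskDiffEllipse_one hL, hsqrt,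
    ← ENNReal.ofReal_mul (sq_nonneg s)]
  ring_nf

/-- the planar Lebesgue measure of the open disk of radius `s`
minus the interior of the ellipse `λ^{2q}x² + λ^{-2q}y² < s²` equals
`2s²(arcsin(|λ|^q/√(λ^{2q}+1)) − arcsin(1/√(λ^{2q}+1)))`; this computes
`m(A_n^{(q)})` and the extremal index for the Euclidean metric. -/
theorem measure_Aq_euclidean
    (lam : ℝ) (hlam : 1 < |lam|) (q : ℕ) (hq : 1 ≤ q) (s : ℝ) (hs : 0 < s) :
    volume {p : ℝ × ℝ | p.1 ^ 2 + p.2 ^ 2 < s ^ 2 ∧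
        lam ^ (2 * q) * p.1 ^ 2 + (lam ^ (2 * q))⁻¹ * p.2 ^ 2 ≥ s ^ 2} =
      ENNReal.ofReal (2 * s ^ 2 *
        (Real.arcsin (|lam| ^ q / Real.sqrt (lam ^ (2 * q) + 1)) -
          Real.arcsin (1 / Real.sqrt (lam ^ (2 * q) + 1)))) :=
  measure_Aq_euclidean_general lam hlam q s hs
end

section
/- Let λ > 1, q ∈ ℕ with q ≥ 1, and s > 0. For i ∈ ℕ₀ put E_i = {(x,y) ∈ ℝ² : λ^{2iq}x² + λ^{−2iq}y² ≤ s²}, U^{(κ)} = ∩_{i=0}^{κ} E_i and Q^κ = U^{(κ)} \ E_{κ+1}, and set f(t) = arcsin(λ^t/√(1+λ^{2t})) − arcsin(1/√(1+λ^{2t})). Then Leb₂(Q^0) = 2s²·f(q), and for every κ ≥ 1, Leb₂(Q^κ) = 2s²·(f((κ+1)q) − f(κq)). -/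
open MeasureTheory Filter Topology Set

noncomputable section

/-- The ellipse region `E_i = {(x,y) : λ^{2iq}x² + λ^{-2iq}y² ≤ s²}`. -/
def ellipseSet (lam s : ℝ) (q i : ℕ) : Set (ℝ × ℝ) :=
  {p | lam ^ (2 * i * q) * p.1 ^ 2 + (lam ^ (2 * i * q))⁻¹ * p.2 ^ 2 ≤ s ^ 2}

/-- `U^{(κ)} = ⋂_{i=0}^{κ} E_i`. -/
def Uset (lam s : ℝ) (q κ : ℕ) : Set (ℝ × ℝ) :=
  ⋂ i ≤ κ, ellipseSet lam s q i

/-- `Q^κ = U^{(κ)} \ E_{κ+1}`. -/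
def Qset (lam s : ℝ) (q κ : ℕ) : Set (ℝ × ℝ) :=
  Uset lam s q κ \ ellipseSet lam s q (κ + 1)

/-- `f(t) = arcsin(λ^t/√(1+λ^{2t})) − arcsin(1/√(1+λ^{2t}))`. -/
def fArc (lam : ℝ) (t : ℕ) : ℝ :=
  Real.arcsin (lam ^ t / Real.sqrt (1 + lam ^ (2 * t))) -
    Real.arcsin (1 / Real.sqrt (1 + lam ^ (2 * t)))

/-!
For `1 ≤ t ≤ u` the map `a ↦ a x² + y² / a` is convex on `(0, ∞)`, so the ellipse of axis ratio
`t` contains the intersection of the disk (ratio `1`) with the ellipse of ratio `u`. Hence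
`U^{(κ)} = E_0 ∩ E_κ`, and `Q^κ` is the difference of the nested lenses `E_0 ∩ E_κ ⊇ E_0 ∩ E_{κ+1}`.
The area of the lens `E_0 ∩ E_t` is computed by Fubini: its vertical chords are those of the disk
for `|x| ≤ s / √(1 + t²)` and those of the ellipse beyond, and both are integrated with the
primitive `x √(s² - x²) + s² arcsin (x / s)` of `2 √(s² - x²)`.
-/
open Real

lemma hasDerivAt_mul_sqrt_add_arcsin {s x : ℝ} (hs : 0 < s) (hx : x ∈ Ioo (-s) s) :
    HasDerivAt (fun x ↦ x * √(s ^ 2 - x ^ 2) + s ^ 2 * arcsin (x / s))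
      (2 * √(s ^ 2 - x ^ 2)) x := by
  have hpos : 0 < s ^ 2 - x ^ 2 := by nlinarith [hx.1, hx.2]
  have hsqrt : HasDerivAt (fun x ↦ √(s ^ 2 - x ^ 2)) (-(2 * x) / (2 * √(s ^ 2 - x ^ 2))) x := by
    simpa using ((hasDerivAt_pow 2 x).const_sub (s ^ 2)).sqrt hpos.ne'
  have harcsin : HasDerivAt (fun x ↦ arcsin (x / s)) (1 / √(1 - (x / s) ^ 2) * (1 / s)) x := by
    have h1 : x / s ≠ -1 := by
      rw [Ne, div_eq_iff hs.ne']; linarith [hx.1]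
    have h2 : x / s ≠ 1 := by
      rw [Ne, div_eq_iff hs.ne']; linarith [hx.2]
    exact (hasDerivAt_arcsin h1 h2).comp x ((hasDerivAt_id x).div_const s)
  have hrescale : √(1 - (x / s) ^ 2) = √(s ^ 2 - x ^ 2) / s := by
    rw [← sqrt_sq hs.le, ← sqrt_div' _ (sq_nonneg s), sqrt_sq hs.le]
    congr 1; field_simp
  refine (((hasDerivAt_id' x).mul hsqrt).add (harcsin.const_mul (s ^ 2))).congr_deriv ?_
  rw [hrescale]
  field_simp
  rw [sq_sqrt hpos.le]
  ring

lemma integral_two_mul_sqrt_sq_sub_sq {s a b : ℝ} (hs : 0 < s) (ha : -s ≤ a) (hab : a ≤ b)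
    (hb : b ≤ s) :
    ∫ x in a..b, 2 * √(s ^ 2 - x ^ 2) =
      (b * √(s ^ 2 - b ^ 2) + s ^ 2 * arcsin (b / s)) -
        (a * √(s ^ 2 - a ^ 2) + s ^ 2 * arcsin (a / s)) := by
  refine intervalIntegral.integral_eq_sub_of_hasDerivAt_of_le hab (by fun_prop)
    (fun x hx ↦ hasDerivAt_mul_sqrt_add_arcsin hs ⟨by linarith [hx.1], by linarith [hx.2]⟩)
    (Continuous.intervalIntegrable (by fun_prop) a b)

lemma volume_setOf_sq_le (a : ℝ) : volume {y : ℝ | y ^ 2 ≤ a} = ENNReal.ofReal (2 * √a) := by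
  rcases le_or_gt 0 a with ha | ha
  · have : {y : ℝ | y ^ 2 ≤ a} = Icc (-√a) √a := by
      ext y; exact Real.sq_le ha
    rw [this, volume_Icc]; ring_nf
  · have : {y : ℝ | y ^ 2 ≤ a} = ∅ := by
      ext y; simpa using ha.trans_le (sq_nonneg y)
    rw [this, sqrt_eq_zero'.mpr ha.le]; simp

lemma volume_setOf_snd_sq_le {m : ℝ → ℝ} (hm : Measurable m) :
    volume {p : ℝ × ℝ | p.2 ^ 2 ≤ m p.1} = ∫⁻ x, ENNReal.ofReal (2 * √(m x)) := by
  rw [Measure.volume_eq_prod, Measure.prod_apply (measurableSet_le (by fun_prop) (by fun_prop))]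
  exact lintegral_congr fun x ↦ volume_setOf_sq_le (m x)

def ellipse (s t : ℝ) : Set (ℝ × ℝ) := {p | t ^ 2 * p.1 ^ 2 + (t ^ 2)⁻¹ * p.2 ^ 2 ≤ s ^ 2}

lemma mem_ellipse_iff {s t : ℝ} (ht : t ≠ 0) {p : ℝ × ℝ} :
    p ∈ ellipse s t ↔ p.2 ^ 2 ≤ t ^ 2 * (s ^ 2 - (t * p.1) ^ 2) := by
  have ht2 : 0 < t ^ 2 := by positivity
  rw [ellipse, mem_ofPred_eq, ← mul_le_mul_iff_of_pos_left ht2, mul_add, ← mul_assoc,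
    ← mul_assoc, mul_inv_cancel₀ ht2.ne', one_mul]
  constructor <;> intro h <;> linarith

lemma ellipse_one_inter_ellipse_subset {s t u : ℝ} (ht : 1 ≤ t) (htu : t ≤ u) :
    ellipse s 1 ∩ ellipse s u ⊆ ellipse s t := by
  rintro ⟨x, y⟩ ⟨h₁, hu⟩
  have hconv : ConvexOn ℝ (Ioi 0) fun a : ℝ ↦ a * x ^ 2 + a⁻¹ * y ^ 2 := by
    have hlin : ConvexOn ℝ (Ioi 0) fun a : ℝ ↦ x ^ 2 • a :=
      (convexOn_id (convex_Ioi 0)).smul (sq_nonneg x)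
    have hinv : ConvexOn ℝ (Ioi 0) fun a : ℝ ↦ y ^ 2 • a ^ (-1 : ℤ) :=
      (convexOn_zpow (-1)).smul (sq_nonneg y)
    refine (hlin.add hinv).congr fun a _ ↦ ?_
    simp only [Pi.add_apply, smul_eq_mul, zpow_neg_one]
    ring
  have := hconv.le_on_segment (x := 1) (y := u ^ 2) (z := t ^ 2) (by simp)
    (by simp only [mem_Ioi]; nlinarith)
    (by rw [segment_eq_Icc (by nlinarith)]; exact ⟨by nlinarith, by nlinarith⟩)
  simp only [ellipse, mem_ofPred_eq, one_pow, inv_one, one_mul] at h₁ hu ⊢ this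
  exact this.trans (max_le h₁ hu)

def lensChord (s t x : ℝ) : ℝ := 2 * √(min (s ^ 2 - x ^ 2) (t ^ 2 * (s ^ 2 - (t * x) ^ 2)))

lemma ellipse_one_inter_ellipse_eq {s t : ℝ} (ht : t ≠ 0) :
    ellipse s 1 ∩ ellipse s t =
      {p | p.2 ^ 2 ≤ min (s ^ 2 - p.1 ^ 2) (t ^ 2 * (s ^ 2 - (t * p.1) ^ 2))} := by
  ext p
  simp [mem_ellipse_iff one_ne_zero, mem_ellipse_iff ht]

lemma lensChord_neg (s t x : ℝ) : lensChord s t (-x) = lensChord s t x := by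
  simp [lensChord]

lemma lensChord_eq_zero {s t x : ℝ} (hs : 0 ≤ s) (ht : 0 < t)
    (hx : x ∉ Icc (-(s / t)) (s / t)) : lensChord s t x = 0 := by
  have hd : t * (s / t) = s := mul_div_cancel₀ s ht.ne'
  have htx : s ^ 2 ≤ (t * x) ^ 2 := by
    rw [mem_Icc, not_and_or, not_le, not_le] at hx
    rcases hx with hx | hx
    · nlinarith [mul_lt_mul_of_pos_left hx ht]
    · nlinarith [mul_lt_mul_of_pos_left hx ht]
  rw [lensChord, sqrt_eq_zero'.mpr, mul_zero]
  exact (min_le_right _ _).trans (mul_nonpos_of_nonneg_of_nonpos (sq_nonneg t) (by linarith))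

lemma lensChord_of_sq_le {s t x : ℝ} (ht : 1 ≤ t) (hx : (1 + t ^ 2) * x ^ 2 ≤ s ^ 2) :
    lensChord s t x = 2 * √(s ^ 2 - x ^ 2) := by
  rw [lensChord, min_eq_left]
  nlinarith [mul_nonneg (sub_nonneg.mpr (one_le_pow₀ (n := 2) ht)) (sub_nonneg.mpr hx)]

lemma lensChord_of_le_sq {s t x : ℝ} (ht : 1 ≤ t) (hx : s ^ 2 ≤ (1 + t ^ 2) * x ^ 2) :
    lensChord s t x = t * (2 * √(s ^ 2 - (t * x) ^ 2)) := by
  rw [lensChord, min_eq_right, sqrt_mul (sq_nonneg t), sqrt_sq (by linarith)]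
  · ring
  nlinarith [mul_nonneg (sub_nonneg.mpr (one_le_pow₀ (n := 2) ht)) (sub_nonneg.mpr hx)]

lemma continuous_lensChord (s t : ℝ) : Continuous (lensChord s t) := by
  unfold lensChord; fun_prop

lemma integral_lensChord_eq_two_mul {s t : ℝ} (hs : 0 ≤ s) (ht : 0 < t) :
    ∫ x, lensChord s t x = 2 * ∫ x in 0..s / t, lensChord s t x := by
  have hint : ∀ a b, IntervalIntegrable (lensChord s t) volume a b :=
    (continuous_lensChord s t).intervalIntegrable
  have hsymm : ∫ x in -(s / t)..0, lensChord s t x = ∫ x in 0..s / t, lensChord s t x := by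
    simpa [lensChord_neg] using
      (intervalIntegral.integral_comp_neg (a := 0) (b := s / t) (lensChord s t)).symm
  rw [← setIntegral_eq_integral_of_forall_compl_eq_zero fun x hx ↦ lensChord_eq_zero hs ht hx,
    integral_Icc_eq_integral_Ioc, ← intervalIntegral.integral_of_le (by simp; positivity),
    ← intervalIntegral.integral_add_adjacent_intervals (hint _ 0) (hint 0 _), hsymm]
  ring

lemma integral_lensChord {s t : ℝ} (hs : 0 < s) (ht : 1 ≤ t) :
    ∫ x, lensChord s t x =
      s ^ 2 * π - 2 * s ^ 2 * (arcsin (t / √(1 + t ^ 2)) - arcsin (1 / √(1 + t ^ 2))) := by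
  have ht0 : 0 < t := by linarith
  obtain ⟨c, hc⟩ : ∃ c, c = s / √(1 + t ^ 2) := ⟨_, rfl⟩
  obtain ⟨d, hd⟩ : ∃ d, d = s / t := ⟨_, rfl⟩
  have hc0 : 0 < c := by rw [hc]; positivity
  have hc2 : (1 + t ^ 2) * c ^ 2 = s ^ 2 := by
    rw [hc, div_pow, sq_sqrt (by positivity)]; field_simp
  have htc : t * c ≤ s := by nlinarith
  have htd : t * d = s := by rw [hd, mul_div_cancel₀ s ht0.ne']
  have hcd : c ≤ d := le_of_mul_le_mul_left (htc.trans htd.ge) ht0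
  have hint : ∀ a b, IntervalIntegrable (lensChord s t) volume a b :=
    (continuous_lensChord s t).intervalIntegrable
  have hinner : ∫ x in 0..c, lensChord s t x = c * (t * c) + s ^ 2 * arcsin (c / s) := by
    rw [intervalIntegral.integral_congr (g := fun x ↦ 2 * √(s ^ 2 - x ^ 2)) fun x hx ↦ ?_,
      integral_two_mul_sqrt_sq_sub_sq hs (by linarith) hc0.le (by nlinarith)]
    · rw [show s ^ 2 - c ^ 2 = (t * c) ^ 2 by linear_combination -hc2, sqrt_sq (by positivity)]
      simp
    · rw [uIcc_of_le hc0.le] at hx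
      exact lensChord_of_sq_le ht (by nlinarith [pow_le_pow_left₀ hx.1 hx.2 2])
  have houter : ∫ x in c..d, lensChord s t x =
      s ^ 2 * (π / 2) - (t * c * c + s ^ 2 * arcsin (t * c / s)) := by
    rw [intervalIntegral.integral_congr (g := fun x ↦ t * (2 * √(s ^ 2 - (t * x) ^ 2)))
      fun x hx ↦ ?_, intervalIntegral.integral_const_mul, ← smul_eq_mul,
      intervalIntegral.smul_integral_comp_mul_left (fun x ↦ 2 * √(s ^ 2 - x ^ 2)), htd,
      integral_two_mul_sqrt_sq_sub_sq hs (by nlinarith) htc le_rfl]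
    · rw [show s ^ 2 - (t * c) ^ 2 = c ^ 2 by linear_combination -hc2, sqrt_sq hc0.le,
        div_self hs.ne', arcsin_one]
      simp
    · rw [uIcc_of_le hcd] at hx
      exact lensChord_of_le_sq ht (by nlinarith [pow_le_pow_left₀ hc0.le hx.1 2])
  have harg₁ : c / s = 1 / √(1 + t ^ 2) := by rw [hc]; field_simp
  have harg₂ : t * c / s = t / √(1 + t ^ 2) := by rw [hc]; field_simp
  rw [integral_lensChord_eq_two_mul hs.le ht0, ← hd,
    ← intervalIntegral.integral_add_adjacent_intervals (hint 0 c) (hint c d), hinner, houter,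
    harg₁, harg₂]
  ring

lemma volume_ellipse_one_inter_ellipse {s t : ℝ} (hs : 0 < s) (ht : 1 ≤ t) :
    volume (ellipse s 1 ∩ ellipse s t) = ENNReal.ofReal
      (s ^ 2 * π - 2 * s ^ 2 * (arcsin (t / √(1 + t ^ 2)) - arcsin (1 / √(1 + t ^ 2)))) := by
  have ht0 : 0 < t := zero_lt_one.trans_le ht
  have hint : Integrable (lensChord s t) :=
    (continuous_lensChord s t).integrable_of_hasCompactSupport
      (HasCompactSupport.intro isCompact_Icc fun x hx ↦ lensChord_eq_zero hs.le ht0 hx)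
  rw [ellipse_one_inter_ellipse_eq ht0.ne', volume_setOf_snd_sq_le
      (m := fun x ↦ min (s ^ 2 - x ^ 2) (t ^ 2 * (s ^ 2 - (t * x) ^ 2))) (by fun_prop),
    ← integral_lensChord hs ht,
    ofReal_integral_eq_lintegral_ofReal hint (.of_forall fun x ↦ by rw [lensChord]; positivity)]
  rfl

lemma arcsin_div_sub_arcsin_one_div_le (t : ℝ) :
    arcsin (t / √(1 + t ^ 2)) - arcsin (1 / √(1 + t ^ 2)) ≤ π / 2 := by
  have : 0 ≤ arcsin (1 / √(1 + t ^ 2)) := arcsin_nonneg.mpr (by positivity)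
  linarith [arcsin_le_pi_div_two (t / √(1 + t ^ 2))]

lemma ellipseSet_eq_ellipse (lam s : ℝ) (q i : ℕ) :
    ellipseSet lam s q i = ellipse s (lam ^ (i * q)) := by
  rw [ellipseSet, ellipse, ← pow_mul, mul_comm (i * q), mul_assoc]

lemma fArc_eq (lam : ℝ) (n : ℕ) :
    fArc lam n = arcsin (lam ^ n / √(1 + (lam ^ n) ^ 2)) - arcsin (1 / √(1 + (lam ^ n) ^ 2)) := by
  rw [fArc, ← pow_mul, mul_comm n]

lemma Uset_eq {lam : ℝ} (hlam : 1 ≤ lam) (s : ℝ) (q κ : ℕ) :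
    Uset lam s q κ = ellipse s 1 ∩ ellipse s (lam ^ (κ * q)) := by
  have hE₀ : ellipse s 1 = ellipseSet lam s q 0 := by simp [ellipseSet_eq_ellipse]
  refine Subset.antisymm (fun p hp ↦ ?_) fun p hp ↦ ?_
  · simp only [Uset, mem_iInter] at hp
    rw [hE₀, ← ellipseSet_eq_ellipse]
    exact ⟨hp 0 κ.zero_le, hp κ le_rfl⟩
  · simp only [Uset, mem_iInter, ellipseSet_eq_ellipse]
    exact fun i hi ↦ ellipse_one_inter_ellipse_subset (one_le_pow₀ hlam)
      (pow_le_pow_right₀ hlam (Nat.mul_le_mul_right q hi)) hp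

lemma volume_Qset {lam s : ℝ} (hlam : 1 ≤ lam) (hs : 0 < s) (q κ : ℕ) :
    volume (Qset lam s q κ) =
      ENNReal.ofReal (2 * s ^ 2 * (fArc lam ((κ + 1) * q) - fArc lam (κ * q))) := by
  have hsub : ellipse s 1 ∩ ellipse s (lam ^ ((κ + 1) * q)) ⊆
      ellipse s 1 ∩ ellipse s (lam ^ (κ * q)) := fun p hp ↦
    ⟨hp.1, ellipse_one_inter_ellipse_subset (one_le_pow₀ hlam)
      (pow_le_pow_right₀ hlam (Nat.mul_le_mul_right q κ.le_succ)) hp⟩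
  have hQ : Qset lam s q κ = (ellipse s 1 ∩ ellipse s (lam ^ (κ * q))) \
      (ellipse s 1 ∩ ellipse s (lam ^ ((κ + 1) * q))) := by
    rw [Qset, Uset_eq hlam, ellipseSet_eq_ellipse]
    ext p
    simp only [Set.mem_sdiff, mem_inter_iff]
    tauto
  have hmeas : MeasurableSet (ellipse s 1 ∩ ellipse s (lam ^ ((κ + 1) * q))) :=
    (measurableSet_le (by fun_prop) (by fun_prop)).inter
      (measurableSet_le (by fun_prop) (by fun_prop))
  have hfin := volume_ellipse_one_inter_ellipse hs (one_le_pow₀ (n := (κ + 1) * q) hlam)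
  rw [hQ, measure_sdiff hsub hmeas.nullMeasurableSet (hfin ▸ ENNReal.ofReal_ne_top), hfin,
    volume_ellipse_one_inter_ellipse hs (one_le_pow₀ hlam), fArc_eq, fArc_eq,
    ← ENNReal.ofReal_sub]
  · ring_nf
  · nlinarith [arcsin_div_sub_arcsin_one_div_le (lam ^ ((κ + 1) * q)), pi_pos]

theorem measure_Qset_general
    (lam : ℝ) (hlam : 1 < lam) (q : ℕ) (s : ℝ) (hs : 0 < s) :
    volume (Qset lam s q 0) = ENNReal.ofReal (2 * s ^ 2 * fArc lam q) ∧
      ∀ κ : ℕ, 1 ≤ κ →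
        volume (Qset lam s q κ) =
          ENNReal.ofReal (2 * s ^ 2 * (fArc lam ((κ + 1) * q) - fArc lam (κ * q))) :=
  ⟨by simpa [fArc] using volume_Qset hlam.le hs q 0, fun κ _ ↦ volume_Qset hlam.le hs q κ⟩

/-- the Lebesgue measures of the sets `Q^κ`:
`Leb₂(Q⁰) = 2s²f(q)` and `Leb₂(Q^κ) = 2s²(f((κ+1)q) − f(κq))` for `κ ≥ 1`. -/
theorem measure_Qset
    (lam : ℝ) (hlam : 1 < lam) (q : ℕ) (hq : 1 ≤ q) (s : ℝ) (hs : 0 < s) :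
    volume (Qset lam s q 0) = ENNReal.ofReal (2 * s ^ 2 * fArc lam q) ∧
      ∀ κ : ℕ, 1 ≤ κ →
        volume (Qset lam s q κ) =
          ENNReal.ofReal (2 * s ^ 2 * (fArc lam ((κ + 1) * q) - fArc lam (κ * q))) :=
  measure_Qset_general lam hlam q s hs
end
end

section
/- Let λ > 1, q ∈ ℕ with q ≥ 1, s > 0, and for i ∈ ℕ₀ put E_i = {(x,y) ∈ ℝ² : λ^{2iq}x² + λ^{−2iq}y² ≤ s²}. Then for every κ ≥ 1, Leb₂(∩_{i=0}^{κ} E_i) ≤ 4·λ^{−κq}·s². Consequently, for any sequence s_n → 0, lim_{n→∞} Σ_{κ≥1} Leb₂(∩_{i=0}^{κ} E_i(s_n)) = 0, since the sum is at most (4/(1−λ^{−q}))·s_n². -/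
open MeasureTheory Filter Topology Set

noncomputable section

/-!
`E_0` is the disc of radius `s`, so `|y| ≤ s` on it, and on `E_κ` the term `λ^{2κq} x²` alone
is at most `s²`, so `|x| ≤ λ^{-κq} s`. Hence `⋂_{i ≤ κ} E_i` lies in a box of area
`4 λ^{-κq} s²`; summing over `κ ≥ 1` is a geometric series with ratio `λ^{-q} < 1`.
-/

lemma abs_fst_le_of_mem_ellipseSet {lam s : ℝ} (hlam : 0 < lam) {q i : ℕ} {p : ℝ × ℝ}
    (hp : p ∈ ellipseSet lam s q i) : |p.1| ≤ (lam ^ (i * q))⁻¹ * |s| := by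
  have hpow : 0 < lam ^ (i * q) := pow_pos hlam _
  have hsq : (lam ^ (i * q) * p.1) ^ 2 ≤ s ^ 2 := by
    have h2 : lam ^ (2 * i * q) = (lam ^ (i * q)) ^ 2 := by
      rw [← pow_mul]; ring_nf
    rw [ellipseSet, mem_ofPred_eq, h2] at hp
    have hy : 0 ≤ ((lam ^ (i * q)) ^ 2)⁻¹ * p.2 ^ 2 := by positivity
    rw [mul_pow]
    linarith
  rw [le_inv_mul_iff₀ hpow, ← abs_of_pos hpow, ← abs_mul]
  exact sq_le_sq.1 hsq

lemma abs_snd_le_of_mem_ellipseSet_zero {lam s : ℝ} {q : ℕ} {p : ℝ × ℝ}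
    (hp : p ∈ ellipseSet lam s q 0) : |p.2| ≤ |s| := by
  simp only [ellipseSet, mem_ofPred_eq, mul_zero, zero_mul, pow_zero, inv_one, one_mul] at hp
  exact sq_le_sq.1 (by nlinarith [sq_nonneg p.1])

lemma Uset_subset_Icc_prod_Icc {lam : ℝ} (hlam : 0 < lam) (s : ℝ) (q κ : ℕ) :
    Uset lam s q κ ⊆
      Icc (-((lam ^ (κ * q))⁻¹ * |s|)) ((lam ^ (κ * q))⁻¹ * |s|) ×ˢ Icc (-|s|) |s| := by
  intro p hp
  have hmem : ∀ i ≤ κ, p ∈ ellipseSet lam s q i := mem_iInter₂.1 hp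
  exact ⟨abs_le.1 (abs_fst_le_of_mem_ellipseSet hlam (hmem κ le_rfl)),
    abs_le.1 (abs_snd_le_of_mem_ellipseSet_zero (hmem 0 κ.zero_le))⟩

lemma volume_Icc_neg_prod_Icc_neg {a b : ℝ} (ha : 0 ≤ a) :
    volume (Icc (-a) a ×ˢ Icc (-b) b) = ENNReal.ofReal (4 * a * b) := by
  rw [Measure.volume_eq_prod, Measure.prod_prod, Real.volume_Icc, Real.volume_Icc,
    ← ENNReal.ofReal_mul (by linarith)]
  ring_nf

theorem volume_Uset_le {lam : ℝ} (hlam : 0 < lam) (s : ℝ) (q κ : ℕ) :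
    volume (Uset lam s q κ) ≤ ENNReal.ofReal (4 * (lam ^ (κ * q))⁻¹ * s ^ 2) := by
  have ha : 0 ≤ (lam ^ (κ * q))⁻¹ * |s| := by positivity
  calc volume (Uset lam s q κ)
      ≤ volume (Icc (-((lam ^ (κ * q))⁻¹ * |s|)) ((lam ^ (κ * q))⁻¹ * |s|) ×ˢ
          Icc (-|s|) |s|) := measure_mono (Uset_subset_Icc_prod_Icc hlam s q κ)
    _ = ENNReal.ofReal (4 * (lam ^ (κ * q))⁻¹ * s ^ 2) := by
        rw [volume_Icc_neg_prod_Icc_neg ha, ← sq_abs s]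
        ring_nf

lemma volume_Uset_succ_le_geometric {lam : ℝ} (hlam : 0 < lam) (s : ℝ) (q κ : ℕ) :
    volume (Uset lam s q (κ + 1)) ≤
      ENNReal.ofReal (4 * s ^ 2) * ENNReal.ofReal (lam ^ q)⁻¹ ^ (κ + 1) := by
  have hr : 0 ≤ (lam ^ q)⁻¹ := by positivity
  refine (volume_Uset_le hlam s q (κ + 1)).trans_eq ?_
  rw [← ENNReal.ofReal_pow hr, ← ENNReal.ofReal_mul (by positivity), inv_pow, ← pow_mul,
    mul_comm q]
  ring_nf

theorem tsum_volume_Uset_succ_le {lam : ℝ} {q : ℕ} (hlam : 0 < lam) (hlq : 1 < lam ^ q)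
    (s : ℝ) :
    ∑' κ : ℕ, volume (Uset lam s q (κ + 1)) ≤
      ENNReal.ofReal (4 / (1 - (lam ^ q)⁻¹) * s ^ 2) := by
  set r := (lam ^ q)⁻¹
  have hr0 : 0 ≤ r := by positivity
  have hr1 : r < 1 := inv_lt_one_of_one_lt₀ hlq
  have hinv : (1 - ENNReal.ofReal r)⁻¹ = ENNReal.ofReal (1 - r)⁻¹ := by
    rw [ENNReal.ofReal_inv_of_pos (x := 1 - r) (by linarith), ENNReal.ofReal_sub 1 hr0,
      ENNReal.ofReal_one]
  calc ∑' κ : ℕ, volume (Uset lam s q (κ + 1))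
      ≤ ∑' κ : ℕ, ENNReal.ofReal (4 * s ^ 2) * ENNReal.ofReal r ^ (κ + 1) :=
        ENNReal.tsum_le_tsum (volume_Uset_succ_le_geometric hlam s q)
    _ = ENNReal.ofReal (4 * s ^ 2) * (ENNReal.ofReal r * (1 - ENNReal.ofReal r)⁻¹) := by
        rw [ENNReal.tsum_mul_left, ENNReal.tsum_geometric_add_one]
    _ ≤ ENNReal.ofReal (4 * s ^ 2) * (1 * (1 - ENNReal.ofReal r)⁻¹) := by
        gcongr
        exact ENNReal.ofReal_le_one.2 hr1.le
    _ = ENNReal.ofReal (4 / (1 - r) * s ^ 2) := by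
        rw [one_mul, hinv, ← ENNReal.ofReal_mul (by positivity)]
        ring_nf

/-- `Leb₂(U^{(κ)}) ≤ 4λ^{-κq}s²` for `κ ≥ 1`; consequently, for
any sequence `sₙ → 0`, `Σ_{κ≥1} Leb₂(U^{(κ)}(sₙ)) → 0`, the sum being at most
`(4/(1−λ^{-q}))·sₙ²`. -/
theorem measure_Uset_le_and_tsum_tendsto_zero
    (lam : ℝ) (hlam : 1 < lam) (q : ℕ) (hq : 1 ≤ q) :
    (∀ s : ℝ, 0 < s → ∀ κ : ℕ, 1 ≤ κ →
      volume (Uset lam s q κ) ≤ ENNReal.ofReal (4 * (lam ^ (κ * q))⁻¹ * s ^ 2)) ∧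
    ∀ s : ℕ → ℝ, Tendsto s atTop (𝓝 0) →
      (∀ n : ℕ, ∑' κ : ℕ, volume (Uset lam (s n) q (κ + 1)) ≤
        ENNReal.ofReal (4 / (1 - (lam ^ q)⁻¹) * (s n) ^ 2)) ∧
      Tendsto (fun n : ℕ => ∑' κ : ℕ, volume (Uset lam (s n) q (κ + 1))) atTop
        (𝓝 0) := by
  have hlam0 : 0 < lam := one_pos.trans hlam
  have hlq : 1 < lam ^ q := one_lt_pow₀ hlam (by omega)
  refine ⟨fun s _ κ _ => volume_Uset_le hlam0 s q κ, fun s hs => ?_⟩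
  have hbound := fun n => tsum_volume_Uset_succ_le hlam0 hlq (s n)
  have hlim : Tendsto (fun n => ENNReal.ofReal (4 / (1 - (lam ^ q)⁻¹) * s n ^ 2)) atTop
      (𝓝 0) := by
    simpa [Function.comp_def] using
      (ENNReal.continuous_ofReal.tendsto _).comp ((hs.pow 2).const_mul _)
  exact ⟨hbound, tendsto_of_tendsto_of_tendsto_of_le_of_le tendsto_const_nhds hlim
    (fun _ => zero_le) hbound⟩
end
end
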